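/- arXiv:2012.04106 — 5 statements merged into one kernel-verified Lean document; each statement's English description precedes it below -/
import Mathlib

section
/- Let H be a Hopf algebra over a field k and λ : H → k a partial action of H on k. Let g, t ∈ H be group-like elements (Δ(g) = g⊗g, ε(g) = 1, Δ(t) = t⊗t, ε(t) = 1) and let x ∈ H be a (g,t)-primitive element, i.e. Δ(x) = x⊗g + t⊗x. Then: (i) if λ(g) = 1, then λ(gu) = λ(u) for all u ∈ H; (ii) if λ(g) = λ(t), then λ(x) = 0; (iii) if λ(x) = 0 and λ(t) = 1, then λ(xu) = 0 for all u ∈ H. (Proposition 2.2.12) -/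
open scoped TensorProduct

/-- The linear map `h ↦ Σ λ(h₁) h₂` (Sweedler notation). -/
noncomputable def lCont (k H : Type*) [CommSemiring k] [Semiring H] [Bialgebra k H]
    (lam : H →ₗ[k] k) : H →ₗ[k] H :=
  (TensorProduct.lid k H).toLinearMap ∘ₗ TensorProduct.map lam LinearMap.id ∘ₗ Coalgebra.comul

/-- A partial action of a bialgebra `H` on its base field `k`: a linear map `λ : H → k` with
`λ(1) = 1` and `λ(h)λ(y) = Σ λ(h₁)λ(h₂y)` for all `h, y ∈ H`; by linearity the right-hand side
is `λ((Σ λ(h₁) h₂) · y)`. -/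
def IsPartialAction (k H : Type*) [CommSemiring k] [Semiring H] [Bialgebra k H]
    (lam : H →ₗ[k] k) : Prop :=
  lam 1 = 1 ∧ ∀ h y : H, lam h * lam y = lam (lCont k H lam h * y)

/-- Proposition 2.2.12: let `H` be a Hopf algebra over a field `k`, `λ : H → k` a partial
action of `H` on `k`, `g, t` group-like elements of `H` and `x` a `(g,t)`-primitive element
(`Δ(x) = x⊗g + t⊗x`).  Then: (i) if `λ(g) = 1` then `λ(gu) = λ(u)` for all `u`;
(ii) if `λ(g) = λ(t)` then `λ(x) = 0`; (iii) if `λ(x) = 0` and `λ(t) = 1` then `λ(xu) = 0`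
for all `u`. -/
theorem prop_2_2_12 {k H : Type*} [Field k] [Ring H] [HopfAlgebra k H]
    (lam : H →ₗ[k] k) (hlam : IsPartialAction k H lam)
    (g t x : H)
    (hΔg : Coalgebra.comul (R := k) g = g ⊗ₜ[k] g)
    (hεg : Coalgebra.counit (R := k) g = 1)
    (hΔt : Coalgebra.comul (R := k) t = t ⊗ₜ[k] t)
    (hεt : Coalgebra.counit (R := k) t = 1)
    (hΔx : Coalgebra.comul (R := k) x = x ⊗ₜ[k] g + t ⊗ₜ[k] x) :
    (lam g = 1 → ∀ u : H, lam (g * u) = lam u) ∧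
    (lam g = lam t → lam x = 0) ∧
    (lam x = 0 → lam t = 1 → ∀ u : H, lam (x * u) = 0) := by

  obtain ⟨h1, hpa⟩ := hlam
  have hg : lCont k H lam g = lam g • g := by
    simp [lCont, hΔg]
  have hx : lCont k H lam x = lam x • g + lam t • x := by
    simp [lCont, hΔx]
  -- key identities
  have key_g : ∀ u : H, lam g * lam u = lam g * lam (g * u) := by
    intro u
    have := hpa g u
    rw [hg] at this
    simpa [mul_comm] using this
  have key_x : ∀ u : H, lam x * lam u = lam x * lam (g * u) + lam t * lam (x * u) := by
    intro u
    have := hpa x u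
    rw [hx] at this
    simpa [add_mul, mul_comm] using this
  refine ⟨?_, ?_, ?_⟩
  · intro hg1 u
    have := key_g u
    rw [hg1, one_mul, one_mul] at this
    exact this.symm
  · intro hgt
    have hgg : lam g = lam g * lam g := by
      have := key_g 1
      simpa [h1] using this
    have hx1 : lam x = lam x * lam g + lam t * lam x := by
      have := key_x 1
      simpa [h1] using this
    rw [← hgt] at hx1
    have : lam g * (lam g - 1) = 0 := by linear_combination -hgg
    rcases mul_eq_zero.mp this with h | h
    · rw [h] at hx1; simpa using hx1
    · have h' : lam g = 1 := by linear_combination h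
      rw [h'] at hx1
      have : lam x + lam x = lam x := by linear_combination -hx1
      linear_combination this
  · intro hx0 ht1 u
    have := key_x u
    rw [hx0, ht1] at this
    simpa using this.symm
end

section
/- For all t, k, i ∈ ℕ₀ and every unit q of a field k, the identity Σ_{s=0}^{i} binom(i,s)_q · binom(i+t−s, i+k)_q · (−1)^s · q^{sk + s(s+1)/2} = binom(t,k)_q holds. (Lemma 3.1.2) -/
/-- The Gaussian binomial coefficient `binom(m, ℓ)_q` in a field `k`, defined by
`binom(0,0)_q = 1`, `binom(m,ℓ)_q = 0` for `ℓ < 0` or `ℓ > m`, and the q-Pascal rule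
`binom(i,s)_q = binom(i-1,s-1)_q + q^s · binom(i-1,s)_q` for `i ≥ 1`. -/
def qbinom {k : Type*} [Field k] (q : k) : ℕ → ℤ → k
  | 0, s => if s = 0 then 1 else 0
  | (i + 1), s => qbinom q i (s - 1) + q ^ s.toNat * qbinom q i s

lemma qbinom_neg {K : Type*} [Field K] (q : K) : ∀ (i : ℕ) (s : ℤ), s < 0 → qbinom q i s = 0
  | 0, s, hs => by simp [qbinom, show s ≠ 0 by omega]
  | (i+1), s, hs => by
    simp only [qbinom]
    rw [qbinom_neg q i (s-1) (by omega), qbinom_neg q i s hs]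
    simp

lemma qbinom_gt {K : Type*} [Field K] (q : K) : ∀ (i : ℕ) (s : ℤ), (i : ℤ) < s → qbinom q i s = 0
  | 0, s, hs => by simp [qbinom, show s ≠ 0 by omega]
  | (i+1), s, hs => by
    simp only [qbinom]
    rw [qbinom_gt q i (s-1) (by push_cast at hs ⊢; omega),
        qbinom_gt q i s (by push_cast at hs ⊢; omega)]
    simp

lemma qbinom_succ {K : Type*} [Field K] (q : K) (i : ℕ) (s : ℕ) :
    qbinom q (i+1) (s : ℤ) = qbinom q i ((s:ℤ) - 1) + q ^ s * qbinom q i (s : ℤ) := by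
  simp [qbinom]

lemma qbinom_pascal' {K : Type*} [Field K] (q : K) :
    ∀ (i s : ℕ), s ≤ i + 1 →
      qbinom q (i+1) (s:ℤ) = q^(i+1-s) * qbinom q i ((s:ℤ)-1) + qbinom q i (s:ℤ)
  | 0, 0, _ => by norm_num [qbinom]
  | 0, 1, _ => by norm_num [qbinom]
  | 0, (s+2), h => by omega
  | (i+1), 0, _ => by
    rw [qbinom_succ]
    push_cast
    rw [qbinom_neg q (i+1) (-1) (by norm_num)]
    ring
  | (i+1), (s+1), h => by
    by_cases hc : s ≤ i
    · have p1 := qbinom_pascal' q i s (by omega)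
      have p2 := qbinom_pascal' q i (s+1) (by omega)
      push_cast at p2
      rw [add_sub_cancel_right] at p2
      have d1 := qbinom_succ q i s
      have d2 := qbinom_succ q i (s+1)
      push_cast at d2
      rw [add_sub_cancel_right] at d2
      rw [qbinom_succ]
      push_cast
      rw [add_sub_cancel_right]
      conv_lhs => rw [p1, p2]
      conv_rhs => rw [d1, d2]
      have e3 : q ^ (i + 1 - s) * q ^ s = q ^ (i + 1) := by
        rw [← pow_add]; congr 1; omega
      have e4 : q ^ (s+1) * q ^ (i - s) = q ^ (i + 1) := by
        rw [← pow_add]; congr 1; omega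
      linear_combination (qbinom q i (s:ℤ)) * e4 - (qbinom q i (s:ℤ)) * e3
    · have hs : s = i + 1 := by omega
      subst hs
      rw [qbinom_succ]
      push_cast
      rw [add_sub_cancel_right]
      rw [qbinom_gt q (i+1) ((i:ℤ)+1+1) (by push_cast; omega)]
      simp [Nat.sub_self]

/-- Lemma 3.1.2: for all `t, k, i ∈ ℕ₀` and every unit `q` of a field,
`Σ_{s=0}^{i} binom(i,s)_q · binom(i+t−s, i+k)_q · (−1)^s · q^{sk + s(s+1)/2} = binom(t,k)_q`. -/
theorem lemma_3_1_2 {K : Type*} [Field K] (q : K) (hq : q ≠ 0) (t k i : ℕ) :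
    ∑ s ∈ Finset.range (i + 1),
      qbinom q i (s : ℤ) * qbinom q (i + t - s) ((i + k : ℕ) : ℤ) *
        (-1 : K) ^ s * q ^ (s * k + s * (s + 1) / 2)
      = qbinom q t (k : ℤ) := by
  induction i with
  | zero => simp [qbinom]
  | succ i ih =>
    have h1 : ∀ s ∈ Finset.range (i + 1 + 1),
        qbinom q (i+1) (s:ℤ) * qbinom q (i+1+t-s) ((i+1+k:ℕ):ℤ) * (-1:K)^s
            * q^(s*k + s*(s+1)/2)
        = q^(i+1-s) * qbinom q i ((s:ℤ)-1) * qbinom q (i+1+t-s) ((i+1+k:ℕ):ℤ) * (-1:K)^s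
            * q^(s*k+s*(s+1)/2)
          + qbinom q i (s:ℤ) * qbinom q (i+1+t-s) ((i+1+k:ℕ):ℤ) * (-1:K)^s
            * q^(s*k+s*(s+1)/2) := by
      intro s hs
      rw [qbinom_pascal' q i s (by have := Finset.mem_range.mp hs; omega)]
      ring
    rw [Finset.sum_congr rfl h1, Finset.sum_add_distrib]
    have hS1 : (∑ s ∈ Finset.range (i+1+1),
        q^(i+1-s) * qbinom q i ((s:ℤ)-1) * qbinom q (i+1+t-s) ((i+1+k:ℕ):ℤ) * (-1:K)^s
          * q^(s*k+s*(s+1)/2))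
        = ∑ s ∈ Finset.range (i+1),
        q^(i-s) * qbinom q i (s:ℤ) * qbinom q (i+t-s) ((i+1+k:ℕ):ℤ) * (-1:K)^(s+1)
          * q^((s+1)*k+(s+1)*(s+1+1)/2) := by
      rw [Finset.sum_range_succ']
      have h0 : qbinom q i (((0:ℕ):ℤ)-1) = 0 := qbinom_neg _ _ _ (by norm_num)
      rw [h0]
      simp only [mul_zero, zero_mul, add_zero]
      apply Finset.sum_congr rfl
      intro s hs
      have hs' : s ≤ i := by have := Finset.mem_range.mp hs; omega
      have c1 : ((s+1:ℕ):ℤ) - 1 = (s:ℤ) := by push_cast; ring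
      have c2 : i + 1 - (s+1) = i - s := by omega
      have c3 : i + 1 + t - (s+1) = i + t - s := by omega
      rw [c1, c2, c3]
    have hS2 : (∑ s ∈ Finset.range (i+1+1),
        qbinom q i (s:ℤ) * qbinom q (i+1+t-s) ((i+1+k:ℕ):ℤ) * (-1:K)^s
          * q^(s*k+s*(s+1)/2))
        = ∑ s ∈ Finset.range (i+1),
        qbinom q i (s:ℤ) * qbinom q (i+1+t-s) ((i+1+k:ℕ):ℤ) * (-1:K)^s
          * q^(s*k+s*(s+1)/2) := by
      rw [Finset.sum_range_succ]
      rw [qbinom_gt q i ((i+1:ℕ):ℤ) (by push_cast; omega)]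
      simp
    rw [hS1, hS2, ← Finset.sum_add_distrib, ← ih]
    apply Finset.sum_congr rfl
    intro s hs
    have hs' : s ≤ i := by have := Finset.mem_range.mp hs; omega
    have c4 : i + 1 + t - s = (i + t - s) + 1 := by omega
    rw [c4, qbinom_succ q (i+t-s) (i+1+k)]
    have c5 : ((i+1+k:ℕ):ℤ) - 1 = ((i+k:ℕ):ℤ) := by push_cast; ring
    rw [c5]
    have key : q^(i-s) * q^((s+1)*k+(s+1)*(s+1+1)/2)
        = q^(i+1+k) * q^(s*k+s*(s+1)/2) := by
      rw [← pow_add, ← pow_add]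
      congr 1
      have hx : (s+1)*(s+1+1) = s*(s+1) + 2*(s+1) := by ring
      have hy : (s+1)*k = s*k + k := by ring
      rw [hx, hy]
      generalize s*(s+1) = x
      generalize s*k = y
      omega
    set A := qbinom q i (s:ℤ)
    set B := qbinom q (i+t-s) ((i+k:ℕ):ℤ)
    set C := qbinom q (i+t-s) ((i+1+k:ℕ):ℤ)
    linear_combination (-((-1:K)^s) * A * C) * key
end

section
/- For every α ∈ k, the linear map λ_α : T_n(q) → k given on the canonical basis by λ_α(g^{n−i}x^j) = (−1)^i q^{i(i+1)/2} binom(j,i)_q α^j for all 0 ≤ i, j ≤ n−1 is a partial action of the Taft algebra T_n(q) on k. (Proposition 3.1.4) -/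
open scoped TensorProduct

/-- The q-number `(m)_q = 1 + q + ⋯ + q^{m−1}`. -/
def qnum {k : Type*} [Field k] (q : k) (m : ℕ) : k := ∑ l ∈ Finset.range m, q ^ l

/-- The q-factorial `(m)_q! = (m)_q (m−1)_q ⋯ (1)_q`, with `(0)_q! = 1`. -/
def qfact {k : Type*} [Field k] (q : k) : ℕ → k
  | 0 => 1
  | (m + 1) => qnum q (m + 1) * qfact q m

/-- The linear map `h ↦ Σ h₁ λ(h₂)` (Sweedler notation). -/
noncomputable def rCont (k H : Type*) [CommSemiring k] [Semiring H] [Bialgebra k H]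
    (lam : H →ₗ[k] k) : H →ₗ[k] H :=
  (TensorProduct.rid k H).toLinearMap ∘ₗ TensorProduct.map LinearMap.id lam ∘ₗ Coalgebra.comul

/-- A symmetric partial action additionally satisfies `λ(h)λ(y) = Σ λ(h₁y)λ(h₂)`, i.e.
`λ(h)λ(y) = λ((Σ h₁ λ(h₂)) · y)`. -/
def IsSymmPartialAction (k H : Type*) [CommSemiring k] [Semiring H] [Bialgebra k H]
    (lam : H →ₗ[k] k) : Prop :=
  IsPartialAction k H lam ∧ ∀ h y : H, lam h * lam y = lam (rCont k H lam h * y)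

/-- A realization of the Taft algebra `T_n(q)`: a Hopf algebra `H` over `k` with generators
`g, x` satisfying `g^n = 1`, `x^n = 0`, `xg = q·gx`, such that `{g^i x^j : 0 ≤ i,j ≤ n−1}` is a
`k`-basis, `g` is group-like and `x` is `(1,g)`-primitive. -/
structure TaftData (k : Type*) [Field k] (n : ℕ) (q : k) (H : Type*)
    [Ring H] [HopfAlgebra k H] where
  g : H
  x : H
  g_pow_n : g ^ n = 1
  x_pow_n : x ^ n = 0
  x_mul_g : x * g = q • (g * x)
  basis : Module.Basis (Fin n × Fin n) k H
  basis_eq : ∀ i j : Fin n, basis (i, j) = g ^ (i : ℕ) * x ^ (j : ℕ)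
  comul_g : Coalgebra.comul (R := k) g = g ⊗ₜ[k] g
  comul_x : Coalgebra.comul (R := k) x = x ⊗ₜ[k] (1 : H) + g ⊗ₜ[k] x
  counit_g : Coalgebra.counit (R := k) g = 1
  counit_x : Coalgebra.counit (R := k) x = 0

/-!
Put `w = (x - α) g⁻¹`. A q-Pascal computation on the basis shows `λ_α (w y) = -α λ_α y`
for every `y`, hence `λ_α (w^i y) = (-α)^i λ_α y`. On the other hand, expanding
`Δ (g^{n-i} x^j)` by the q-binomial theorem and using the q-trinomial identity
`binom(j,l) binom(j-l,i-l) = binom(j,i) binom(i,l)` gives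
`Σ λ_α(h₁) h₂ = binom(j,i) α^{j-i} q^{i(i+1)/2} w^i` for `h = g^{n-i} x^j`. Multiplying by
`y` and applying `λ_α` yields exactly `λ_α(h) λ_α(y)`.
-/

open Finset

theorem Nat.succ_mul_succ_add_one_div_two (m : ℕ) :
    (m + 1) * (m + 1 + 1) / 2 = m * (m + 1) / 2 + (m + 1) := by
  have h : (m + 1) * (m + 1 + 1) = m * (m + 1) + 2 * (m + 1) := by ring
  rw [h, Nat.add_mul_div_left _ _ two_pos]

section QBinom

variable {k : Type*} [Field k] (q : k)

theorem qbinom_eq_zero_of_neg {m : ℕ} {s : ℤ} (hs : s < 0) : qbinom q m s = 0 := by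
  induction m generalizing s with
  | zero => simp [qbinom, hs.ne]
  | succ m ih => rw [qbinom, ih (by omega), ih hs, mul_zero, add_zero]

theorem qbinom_eq_zero_of_lt {m : ℕ} {s : ℤ} (hs : (m : ℤ) < s) : qbinom q m s = 0 := by
  induction m generalizing s with
  | zero => rw [qbinom, if_neg (by omega)]
  | succ m ih => rw [qbinom, ih (by omega), ih (by omega), mul_zero, add_zero]

theorem qbinom_natCast_succ (m l : ℕ) :
    qbinom q (m + 1) l = qbinom q m (l - 1) + q ^ l * qbinom q m l := by
  rw [qbinom, Int.toNat_natCast]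

theorem qbinom_succ_succ (m l : ℕ) :
    qbinom q (m + 1) (l + 1 : ℕ) = qbinom q m l + q ^ (l + 1) * qbinom q m (l + 1 : ℕ) := by
  simpa using qbinom_natCast_succ q m (l + 1)

@[simp]
theorem qbinom_zero_right (m : ℕ) : qbinom q m 0 = 1 := by
  induction m with
  | zero => simp [qbinom]
  | succ m ih => simpa [ih, qbinom_eq_zero_of_neg] using qbinom_natCast_succ q m 0

theorem qbinom_self (m : ℕ) : qbinom q m m = 1 := by
  induction m with
  | zero => simp [qbinom]
  | succ m ih => rw [qbinom_succ_succ, ih, qbinom_eq_zero_of_lt q (by omega), mul_zero, add_zero]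

theorem qnum_add (a b : ℕ) : qnum q (a + b) = qnum q a + q ^ a * qnum q b := by
  simp only [qnum, sum_range_add, pow_add, mul_sum]

theorem qbinom_mul_qfact_mul_qfact {m d : ℕ} (hd : d ≤ m) :
    qbinom q m d * (qfact q d * qfact q (m - d)) = qfact q m := by
  induction m generalizing d with
  | zero =>
    obtain rfl : d = 0 := by omega
    simp [qfact]
  | succ m ih =>
    obtain rfl | ⟨e, rfl⟩ : d = 0 ∨ ∃ e, d = e + 1 := by rcases d with _ | e <;> simp
    · simp [qfact]
    rcases Nat.lt_or_ge e m with he | he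
    · have h1 := ih (d := e) (by omega)
      have h2 := ih (d := e + 1) (by omega)
      have hsplit : qnum q (m + 1) = qnum q (e + 1) + q ^ (e + 1) * qnum q (m - e) := by
        rw [← qnum_add]; congr 1; omega
      have hfe : qfact q (m - e) = qnum q (m - e) * qfact q (m - (e + 1)) := by
        rw [show m - e = m - (e + 1) + 1 by omega, qfact]
      rw [qfact] at h2
      rw [qbinom_succ_succ, Nat.add_sub_add_right, qfact, qfact, hsplit]
      linear_combination qnum q (e + 1) * h1 + q ^ (e + 1) * qnum q (m - e) * h2
        + q ^ (e + 1) * qbinom q m (e + 1 : ℕ) * qnum q (e + 1) * qfact q e * hfe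
    · obtain rfl : e = m := by omega
      rw [qbinom_self, Nat.sub_self, one_mul, qfact, mul_one]

end QBinom

section QCommuting

variable {k A : Type*} [Field k] [Semiring A] [Algebra k A] {q : k} {X Y : A}

theorem mul_pow_eq_smul_of_mul_eq_smul (h : X * Y = q • (Y * X)) (l : ℕ) :
    X * Y ^ l = q ^ l • (Y ^ l * X) := by
  induction l with
  | zero => simp
  | succ l ih =>
    rw [pow_succ, ← mul_assoc, ih, smul_mul_assoc, mul_assoc, h, mul_smul_comm, smul_smul,
      ← mul_assoc, pow_succ q]

theorem add_pow_of_mul_eq_smul (h : X * Y = q • (Y * X)) (j : ℕ) :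
    (X + Y) ^ j = ∑ l ∈ range (j + 1), qbinom q j l • (Y ^ l * X ^ (j - l)) := by
  induction j with
  | zero => simp
  | succ j ih =>
    have hterm : ∀ l ∈ range (j + 1), (X + Y) * (qbinom q j l • (Y ^ l * X ^ (j - l))) =
        (q ^ l * qbinom q j l) • (Y ^ l * X ^ (j + 1 - l))
          + qbinom q j l • (Y ^ (l + 1) * X ^ (j + 1 - (l + 1))) := by
      intro l hl
      rw [mul_smul_comm, add_mul, ← mul_assoc, mul_pow_eq_smul_of_mul_eq_smul h, smul_mul_assoc,
        mul_assoc, ← pow_succ', ← mul_assoc, ← pow_succ', smul_add, smul_smul,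
        show j - l + 1 = j + 1 - l by simp at hl; omega, Nat.add_sub_add_right,
        mul_comm (qbinom q j l)]
    rw [pow_succ', ih, mul_sum, sum_congr rfl hterm, sum_add_distrib, add_comm]
    simp_rw [qbinom_natCast_succ, add_smul, sum_add_distrib]
    congr 1
    · symm
      rw [sum_range_succ', Nat.cast_zero, zero_sub, qbinom_eq_zero_of_neg q (by norm_num),
        zero_smul, add_zero]
      simp only [Nat.cast_succ, add_sub_cancel_right]
    · symm
      rw [sum_range_succ _ (j + 1), qbinom_eq_zero_of_lt q (by omega), mul_zero, zero_smul,
        add_zero]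

end QCommuting

section PrimitiveRoot

variable {k : Type*} [Field k] {q : k} {n : ℕ}

theorem qnum_ne_zero (hq : IsPrimitiveRoot q n) {l : ℕ} (h0 : 0 < l) (hl : l < n) :
    qnum q l ≠ 0 := by
  intro h
  have hgeom : qnum q l * (q - 1) = q ^ l - 1 := geom_sum_mul q l
  rw [h, zero_mul, eq_comm, sub_eq_zero] at hgeom
  exact hq.pow_ne_one_of_pos_of_lt h0.ne' hl hgeom

theorem qfact_ne_zero (hq : IsPrimitiveRoot q n) {m : ℕ} (hm : m < n) : qfact q m ≠ 0 := by
  induction m with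
  | zero => exact one_ne_zero
  | succ m ih => exact mul_ne_zero (qnum_ne_zero hq m.succ_pos hm) (ih (by omega))

theorem qbinom_eq_zero_of_isPrimitiveRoot (hq : IsPrimitiveRoot q n) {d : ℕ} (h0 : 0 < d)
    (hd : d < n) : qbinom q n d = 0 := by
  have hfact : qfact q n = 0 := by
    obtain ⟨m, rfl⟩ : ∃ m, n = m + 1 := ⟨n - 1, by omega⟩
    rw [qfact, qnum, hq.geom_sum_eq_zero (by omega), zero_mul]
  have h := qbinom_mul_qfact_mul_qfact q hd.le
  rw [hfact] at h
  exact (mul_eq_zero.1 h).resolve_right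
    (mul_ne_zero (qfact_ne_zero hq hd) (qfact_ne_zero hq (by omega)))

theorem qbinom_mul_qbinom (hq : IsPrimitiveRoot q n) {l i j : ℕ} (hl : l ≤ i) (hi : i ≤ j)
    (hj : j < n) : qbinom q j l * qbinom q (j - l) (i - l : ℕ) = qbinom q j i * qbinom q i l := by
  have hne : qfact q l * qfact q (i - l) * qfact q (j - i) ≠ 0 :=
    mul_ne_zero (mul_ne_zero (qfact_ne_zero hq (by omega)) (qfact_ne_zero hq (by omega)))
      (qfact_ne_zero hq (by omega))
  apply mul_right_cancel₀ hne
  have e1 := qbinom_mul_qfact_mul_qfact q (m := j) (d := l) (by omega)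
  have e2 := qbinom_mul_qfact_mul_qfact q (m := j - l) (d := i - l) (by omega)
  have e3 := qbinom_mul_qfact_mul_qfact q (m := j) (d := i) hi
  have e4 := qbinom_mul_qfact_mul_qfact q (m := i) (d := l) hl
  rw [show j - l - (i - l) = j - i by omega] at e2
  linear_combination qbinom q j l * qfact q l * e2 + e1 - e3
    - qbinom q j i * qfact q (j - i) * e4

theorem neg_one_pow_mul_pow_mul_qbinom_pred (hq : IsPrimitiveRoot q n) {t : ℕ} (ht : t < n) :
    (-1) ^ t * q ^ (t * (t + 1) / 2) * qbinom q (n - 1) t = 1 := by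
  induction t with
  | zero => simp
  | succ t ih =>
    have hpascal := qbinom_succ_succ q (n - 1) t
    rw [Nat.sub_add_cancel (by omega), qbinom_eq_zero_of_isPrimitiveRoot hq t.succ_pos ht]
      at hpascal
    rw [Nat.succ_mul_succ_add_one_div_two, pow_add, pow_succ]
    linear_combination ih (by omega) + (-1) ^ t * q ^ (t * (t + 1) / 2) * hpascal

end PrimitiveRoot

section WPowCoeff

variable {k : Type*} [Field k] (q α : k)

def wPowCoeff (i l : ℕ) : k :=
  (-1) ^ (i - l) * q ^ ((i - l) * (i - l + 1) / 2) * qbinom q i l * α ^ (i - l)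

theorem wPowCoeff_eq_zero_of_lt {i l : ℕ} (h : i < l) : wPowCoeff q α i l = 0 := by
  rw [wPowCoeff, qbinom_eq_zero_of_lt q (by omega), mul_zero, zero_mul]

theorem wPowCoeff_succ_zero (i : ℕ) :
    wPowCoeff q α (i + 1) 0 = -(q ^ (i + 1) * α * wPowCoeff q α i 0) := by
  simp only [wPowCoeff, Nat.sub_zero, Nat.cast_zero, qbinom_zero_right,
    Nat.succ_mul_succ_add_one_div_two]
  ring

theorem wPowCoeff_succ_succ (i l : ℕ) :
    wPowCoeff q α (i + 1) (l + 1) =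
      wPowCoeff q α i l - q ^ (i + 1) * α * wPowCoeff q α i (l + 1) := by
  rcases Nat.lt_or_ge l i with hl | hl
  · obtain ⟨m, rfl⟩ : ∃ m, i = l + m + 1 := ⟨i - l - 1, by omega⟩
    simp only [wPowCoeff, qbinom_succ_succ, show l + m + 1 + 1 - (l + 1) = m + 1 by omega,
      show l + m + 1 - l = m + 1 by omega, show l + m + 1 - (l + 1) = m by omega,
      Nat.succ_mul_succ_add_one_div_two]
    ring
  · rw [wPowCoeff_eq_zero_of_lt q α (by omega : i < l + 1)]
    simp only [wPowCoeff, qbinom_succ_succ, Nat.sub_eq_zero_of_le hl,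
      Nat.sub_eq_zero_of_le (by omega : i + 1 ≤ l + 1),
      qbinom_eq_zero_of_lt q (by omega : (i : ℤ) < (l + 1 : ℕ))]
    ring

theorem sum_wPowCoeff_succ (i : ℕ) {M : Type*} [AddCommGroup M] [Module k M] (v : ℕ → M) :
    ∑ l ∈ range (i + 1 + 1), wPowCoeff q α (i + 1) l • v l =
      ∑ l ∈ range (i + 1), wPowCoeff q α i l • v (l + 1)
        - ∑ l ∈ range (i + 1), (q ^ (i + 1) * α * wPowCoeff q α i l) • v l := by
  have hext : ∑ l ∈ range (i + 1), (q ^ (i + 1) * α * wPowCoeff q α i l) • v l =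
      ∑ l ∈ range (i + 1 + 1), (q ^ (i + 1) * α * wPowCoeff q α i l) • v l := by
    rw [sum_range_succ _ (i + 1), wPowCoeff_eq_zero_of_lt q α i.lt_succ_self, mul_zero,
      zero_smul, add_zero]
  rw [hext, sum_range_succ', sum_range_succ' (fun l => (_ * wPowCoeff q α i l) • v l)]
  simp only [wPowCoeff_succ_succ, wPowCoeff_succ_zero, sub_smul, neg_smul, sum_sub_distrib]
  abel

end WPowCoeff

namespace TaftData

variable {k H : Type*} [Field k] [Ring H] [HopfAlgebra k H] {n : ℕ} {q : k}
  (T : TaftData k n q H)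

theorem x_mul_g_pow (a : ℕ) : T.x * T.g ^ a = q ^ a • (T.g ^ a * T.x) :=
  mul_pow_eq_smul_of_mul_eq_smul T.x_mul_g a

theorem comul_g_pow_mul_x_pow (a j : ℕ) :
    Coalgebra.comul (R := k) (T.g ^ a * T.x ^ j) = ∑ l ∈ range (j + 1),
      qbinom q j l • ((T.g ^ (a + l) * T.x ^ (j - l)) ⊗ₜ[k] (T.g ^ a * T.x ^ l)) := by
  have hcomm : (T.x ⊗ₜ[k] (1 : H)) * (T.g ⊗ₜ[k] T.x) =
      q • ((T.g ⊗ₜ[k] T.x) * (T.x ⊗ₜ[k] (1 : H))) := by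
    simp only [Algebra.TensorProduct.tmul_mul_tmul, T.x_mul_g, one_mul, mul_one,
      TensorProduct.smul_tmul']
  simp only [Bialgebra.comul_mul, Bialgebra.comul_pow, T.comul_x, T.comul_g,
    Algebra.TensorProduct.tmul_pow, add_pow_of_mul_eq_smul hcomm, mul_sum, mul_smul_comm,
    Algebra.TensorProduct.tmul_mul_tmul, one_pow, mul_one, ← mul_assoc, ← pow_add]

theorem lCont_g_pow_mul_x_pow (lam : H →ₗ[k] k) (a j : ℕ) :
    lCont k H lam (T.g ^ a * T.x ^ j) = ∑ l ∈ range (j + 1),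
      (qbinom q j l * lam (T.g ^ (a + l) * T.x ^ (j - l))) • (T.g ^ a * T.x ^ l) := by
  simp only [lCont, LinearMap.comp_apply, comul_g_pow_mul_x_pow, map_sum, map_smul,
    TensorProduct.map_tmul, LinearMap.id_apply, LinearEquiv.coe_coe, TensorProduct.lid_tmul,
    smul_smul]

theorem linearMap_ext {M : Type*} [AddCommMonoid M] [Module k M] {f f' : H →ₗ[k] M}
    (h : ∀ i j, i < n → j < n → f (T.g ^ (n - i) * T.x ^ j) = f' (T.g ^ (n - i) * T.x ^ j)) :
    f = f' := by
  refine T.basis.ext fun ⟨a, b⟩ => ?_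
  rw [T.basis_eq]
  have hga : T.g ^ (a : ℕ) = T.g ^ (n - (n - a) % n) := by
    rcases Nat.eq_zero_or_pos (a : ℕ) with ha | ha
    · rw [ha, Nat.sub_zero, Nat.mod_self, Nat.sub_zero, pow_zero, T.g_pow_n]
    · rw [Nat.mod_eq_of_lt (by omega), Nat.sub_sub_self a.isLt.le]
  rw [hga]
  exact h _ _ (Nat.mod_lt _ a.pos) b.isLt

/-- The element `(x - α) g⁻¹`, on which `λ_α` acts as the scalar `-α`. -/
def w (α : k) : H := (T.x - α • 1) * T.g ^ (n - 1)

theorem w_mul_g_pow_mul_x_pow (α : k) {i : ℕ} (hi : i < n) (l : ℕ) :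
    T.w α * (T.g ^ (n - i) * T.x ^ l) =
      q ^ (n - (i + 1)) • (T.g ^ (n - (i + 1)) * T.x ^ (l + 1))
        - α • (T.g ^ (n - (i + 1)) * T.x ^ l) := by
  have hg : T.g ^ (n - 1) * T.g ^ (n - i) = T.g ^ (n - (i + 1)) := by
    rw [← pow_add, show n - 1 + (n - i) = n - (i + 1) + n by omega, pow_add, T.g_pow_n, mul_one]
  rw [w, mul_assoc, ← mul_assoc (T.g ^ _), hg, sub_mul, smul_mul_assoc, one_mul, ← mul_assoc,
    x_mul_g_pow, smul_mul_assoc, mul_assoc, ← pow_succ']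

theorem smul_w_pow (hq : q ^ n = 1) (α : k) {i : ℕ} (hi : i < n) :
    q ^ (i * (i + 1) / 2) • T.w α ^ i =
      ∑ l ∈ range (i + 1), wPowCoeff q α i l • (T.g ^ (n - i) * T.x ^ l) := by
  induction i with
  | zero => simp [wPowCoeff, T.g_pow_n]
  | succ i ih =>
    have hstep : ∀ l, q ^ (i + 1) • (T.w α * (T.g ^ (n - i) * T.x ^ l)) =
        T.g ^ (n - (i + 1)) * T.x ^ (l + 1)
          - (q ^ (i + 1) * α) • (T.g ^ (n - (i + 1)) * T.x ^ l) := by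
      intro l
      rw [T.w_mul_g_pow_mul_x_pow α (by omega), smul_sub, smul_smul, smul_smul, ← pow_add,
        Nat.add_sub_cancel' (by omega), hq, one_smul]
    -- `q^((i+1)(i+2)/2) w^(i+1) = q^(i+1) • w * (q^(i(i+1)/2) w^i)`, then expand by `ih`
    rw [sum_wPowCoeff_succ, Nat.succ_mul_succ_add_one_div_two, pow_add, mul_comm (q ^ _),
      mul_smul, pow_succ' (T.w α), ← mul_smul_comm, ih (by omega), mul_sum, smul_sum,
      ← sum_sub_distrib]
    refine sum_congr rfl fun l _ => ?_
    rw [mul_smul_comm, smul_comm, hstep, smul_sub, smul_smul, mul_comm (wPowCoeff q α i l)]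

section PartialAction

variable {α : k} {lam : H →ₗ[k] k}
  (hlam : ∀ i j : ℕ, i ≤ n - 1 → j ≤ n - 1 →
    lam (T.g ^ (n - i) * T.x ^ j) =
      (-1 : k) ^ i * q ^ (i * (i + 1) / 2) * qbinom q j (i : ℤ) * α ^ j)
include hlam

theorem lam_x_pow {j : ℕ} (hj : j < n) : lam (T.x ^ j) = α ^ j := by
  simpa [T.g_pow_n] using hlam 0 j (Nat.zero_le _) (by omega)

theorem lam_g_pow_mul_x_pow_of_pos (hq : IsPrimitiveRoot q n) {i j : ℕ} (hi0 : 0 < i)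
    (hi : i < n) (hj : j ≤ n) :
    lam (T.g ^ (n - i) * T.x ^ j) =
      (-1 : k) ^ i * q ^ (i * (i + 1) / 2) * qbinom q j (i : ℤ) * α ^ j := by
  rcases hj.lt_or_eq with hj | rfl
  · exact hlam i j (by omega) (by omega)
  · rw [T.x_pow_n, mul_zero, map_zero, qbinom_eq_zero_of_isPrimitiveRoot hq hi0 hi, mul_zero,
      zero_mul]

theorem lam_w_mul_g_pow_mul_x_pow (hq : IsPrimitiveRoot q n) {m s : ℕ} (hm : m < n)
    (hs : s < n) :
    lam (T.w α * (T.g ^ (n - m) * T.x ^ s)) = -α * lam (T.g ^ (n - m) * T.x ^ s) := by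
  rw [T.w_mul_g_pow_mul_x_pow α hm, map_sub, map_smul, map_smul, smul_eq_mul, smul_eq_mul,
    hlam m s (by omega) (by omega)]
  rcases Nat.lt_or_ge (m + 1) n with hm' | hm'
  · rw [T.lam_g_pow_mul_x_pow_of_pos (j := s + 1) hlam hq (by omega) hm' hs,
      T.lam_g_pow_mul_x_pow_of_pos (j := s) hlam hq (by omega) hm' hs.le,
      Nat.succ_mul_succ_add_one_div_two]
    have hqn : q ^ (n - (m + 1)) * q ^ (m + 1) = 1 := by
      rw [← pow_add, Nat.sub_add_cancel hm'.le, hq.pow_eq_one]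
    linear_combination (-1) ^ (m + 1) * q ^ (m * (m + 1) / 2) * α ^ (s + 1)
      * (qbinom q (s + 1) (m + 1 : ℕ) * hqn + qbinom_succ_succ q s m)
  · obtain rfl : m = n - 1 := by omega
    simp only [show n - (n - 1 + 1) = 0 by omega, pow_zero, one_mul]
    rcases Nat.lt_or_ge (s + 1) n with hs' | hs'
    · rw [T.lam_x_pow hlam hs', T.lam_x_pow hlam hs, qbinom_eq_zero_of_lt q (by omega)]
      ring
    · obtain rfl : s = n - 1 := by omega
      rw [show T.x ^ (n - 1 + 1) = 0 by rw [Nat.sub_add_cancel (by omega), T.x_pow_n], map_zero,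
        T.lam_x_pow hlam hs]
      linear_combination α * α ^ (n - 1) * neg_one_pow_mul_pow_mul_qbinom_pred hq hs

theorem lam_w_mul (hq : IsPrimitiveRoot q n) (y : H) : lam (T.w α * y) = -α * lam y := by
  have hmap : lam ∘ₗ LinearMap.mulLeft k (T.w α) = (-α) • lam :=
    T.linearMap_ext fun i j hi hj => T.lam_w_mul_g_pow_mul_x_pow hlam hq hi hj
  simpa using LinearMap.congr_fun hmap y

theorem lam_w_pow_mul (hq : IsPrimitiveRoot q n) (i : ℕ) (y : H) :
    lam (T.w α ^ i * y) = (-α) ^ i * lam y := by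
  induction i with
  | zero => simp
  | succ i ih => rw [pow_succ', mul_assoc, T.lam_w_mul hlam hq, ih, pow_succ', mul_assoc]

theorem qbinom_mul_lam_g_pow_add_mul_x_pow (hq : IsPrimitiveRoot q n) {i j l : ℕ} (hi : i < n)
    (hj : j < n) (hl : l ≤ j) :
    qbinom q j l * lam (T.g ^ (n - i + l) * T.x ^ (j - l)) =
      qbinom q j i * α ^ (j - i) * wPowCoeff q α i l := by
  rcases Nat.lt_or_ge i l with hil | hli
  · rw [wPowCoeff_eq_zero_of_lt q α hil, mul_zero, show n - i + l = n - (n - l + i) + n by omega,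
      pow_add, T.g_pow_n, mul_one, hlam (n - l + i) (j - l) (by omega) (by omega),
      qbinom_eq_zero_of_lt q (by omega : ((j - l : ℕ) : ℤ) < (n - l + i : ℕ))]
    ring
  rw [show n - i + l = n - (i - l) by omega, hlam (i - l) (j - l) (by omega) (by omega), wPowCoeff]
  rcases Nat.lt_or_ge j i with hji | hij
  · rw [qbinom_eq_zero_of_lt q (by omega : ((j - l : ℕ) : ℤ) < (i - l : ℕ)),
      qbinom_eq_zero_of_lt q (by omega : (j : ℤ) < i)]
    ring
  have hα : α ^ (j - l) = α ^ (j - i) * α ^ (i - l) := by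
    rw [← pow_add]
    congr 1
    omega
  rw [hα]
  linear_combination (-1) ^ (i - l) * q ^ ((i - l) * (i - l + 1) / 2) * α ^ (j - i) * α ^ (i - l)
    * qbinom_mul_qbinom hq hli hij hj

theorem lCont_g_pow_mul_x_pow_eq_smul_w_pow (hq : IsPrimitiveRoot q n) {i j : ℕ} (hi : i < n)
    (hj : j < n) :
    lCont k H lam (T.g ^ (n - i) * T.x ^ j) =
      (qbinom q j i * α ^ (j - i)) • (q ^ (i * (i + 1) / 2) • T.w α ^ i) := by
  rw [lCont_g_pow_mul_x_pow, T.smul_w_pow hq.pow_eq_one α hi, smul_sum]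
  rw [sum_congr rfl fun l hl => by
    rw [T.qbinom_mul_lam_g_pow_add_mul_x_pow hlam hq hi hj (Nat.lt_succ_iff.1 (mem_range.1 hl))]]
  rcases Nat.lt_or_ge j i with hji | hij
  · simp [qbinom_eq_zero_of_lt q (by omega : (j : ℤ) < i)]
  rw [← sum_subset (range_subset_range.2 (Nat.succ_le_succ hij)) fun l _ hl => by
    rw [wPowCoeff_eq_zero_of_lt q α (by simpa using hl), mul_zero, zero_smul]]
  exact sum_congr rfl fun l _ => by rw [smul_smul]

theorem lam_mul_eq_lam_lCont_mul (hq : IsPrimitiveRoot q n) {i j : ℕ} (hi : i < n) (hj : j < n)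
    (y : H) :
    lam (T.g ^ (n - i) * T.x ^ j) * lam y =
      lam (lCont k H lam (T.g ^ (n - i) * T.x ^ j) * y) := by
  rw [T.lCont_g_pow_mul_x_pow_eq_smul_w_pow hlam hq hi hj, smul_mul_assoc, smul_mul_assoc,
    map_smul, map_smul, T.lam_w_pow_mul hlam hq, hlam i j (by omega) (by omega), smul_eq_mul,
    smul_eq_mul, neg_pow]
  have hα : qbinom q j i * α ^ j = qbinom q j i * (α ^ (j - i) * α ^ i) := by
    rcases Nat.lt_or_ge j i with hji | hij
    · rw [qbinom_eq_zero_of_lt q (by omega), zero_mul, zero_mul]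
    · rw [← pow_add, Nat.sub_add_cancel hij]
  linear_combination (-1) ^ i * q ^ (i * (i + 1) / 2) * lam y * hα

end PartialAction

end TaftData

theorem prop_3_1_4_general {k H : Type*} [Field k] [Ring H] [HopfAlgebra k H]
    {n : ℕ} {q : k} (hq : IsPrimitiveRoot q n)
    (T : TaftData k n q H) (α : k) (lam : H →ₗ[k] k)
    (hlam : ∀ i j : ℕ, i ≤ n - 1 → j ≤ n - 1 →
      lam (T.g ^ (n - i) * T.x ^ j) =
        (-1 : k) ^ i * q ^ (i * (i + 1) / 2) * qbinom q j (i : ℤ) * α ^ j) :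
    IsPartialAction k H lam := by
  refine ⟨by simpa [T.g_pow_n] using hlam 0 0 (Nat.zero_le _) (Nat.zero_le _), fun h y => ?_⟩
  have hmap : lam y • lam = lam ∘ₗ LinearMap.mulRight k y ∘ₗ lCont k H lam :=
    T.linearMap_ext fun i j hi hj => by
      simpa [mul_comm] using T.lam_mul_eq_lam_lCont_mul hlam hq hi hj y
  simpa [mul_comm] using LinearMap.congr_fun hmap h

/-- Proposition 3.1.4: for every `α ∈ k`, the linear map `λ_α : T_n(q) → k` given on the
canonical basis by `λ_α(g^{n−i}x^j) = (−1)^i q^{i(i+1)/2} binom(j,i)_q α^j` for all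
`0 ≤ i, j ≤ n−1` is a partial action of the Taft algebra `T_n(q)` on `k`. -/
theorem prop_3_1_4 {k H : Type*} [Field k] [Ring H] [HopfAlgebra k H]
    {n : ℕ} (hn : 2 ≤ n) {q : k} (hq : IsPrimitiveRoot q n)
    (T : TaftData k n q H) (α : k) (lam : H →ₗ[k] k)
    (hlam : ∀ i j : ℕ, i ≤ n - 1 → j ≤ n - 1 →
      lam (T.g ^ (n - i) * T.x ^ j) =
        (-1 : k) ^ i * q ^ (i * (i + 1) / 2) * qbinom q j (i : ℤ) * α ^ j) :
    IsPartialAction k H lam :=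
  prop_3_1_4_general hq T α lam hlam
end

section
/- For every α = (α_1, …, α_{n−1}) ∈ k^{n−1}, the linear map λ_α : H_{2^n} → k determined on the canonical basis B by λ_α(1) = 1, λ_α(x_i) = λ_α(g x_i) = α_i for all i ∈ {1, …, n−1}, and λ_α = 0 on all other elements of B, is a partial action of the Nichols Hopf algebra H_{2^n} on k. (Proposition 4.1.1) -/
open scoped TensorProduct

/-- A realization of the Nichols Hopf algebra `H_{2^n}`: a Hopf algebra `H` over `k` (with
`char k ≠ 2`) generated by `g, x_1, …, x_{n−1}` with `g² = 1`, `x_i² = 0`, `x_i g = −g x_i`,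
`x_i x_j = −x_j x_i`, such that the products `g^{j₀} x_1^{j₁} ⋯ x_{n−1}^{j_{n−1}}`
(`j_t ∈ {0,1}`) form a `k`-basis, `g` is group-like and each `x_i` is `(1,g)`-primitive. -/
structure NicholsData (k : Type*) [Field k] (n : ℕ) (H : Type*)
    [Ring H] [HopfAlgebra k H] where
  g : H
  x : Fin (n - 1) → H
  g_sq : g ^ 2 = 1
  x_sq : ∀ i, x i ^ 2 = 0
  x_mul_g : ∀ i, x i * g = -(g * x i)
  x_mul_x : ∀ i j, x i * x j = -(x j * x i)
  basis : Module.Basis (Fin 2 × (Fin (n - 1) → Fin 2)) k H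
  basis_eq : ∀ p : Fin 2 × (Fin (n - 1) → Fin 2),
    basis p = g ^ (p.1 : ℕ) *
      ((List.finRange (n - 1)).map (fun i => x i ^ ((p.2 i : ℕ)))).prod
  comul_g : Coalgebra.comul (R := k) g = g ⊗ₜ[k] g
  comul_x : ∀ i, Coalgebra.comul (R := k) (x i) = x i ⊗ₜ[k] (1 : H) + g ⊗ₜ[k] x i
  counit_g : Coalgebra.counit (R := k) g = 1
  counit_x : ∀ i, Coalgebra.counit (R := k) (x i) = 0

/-!
Everything the proof needs about `λ` is the identity `λ(x_i z) = α_i (λ z - λ(g z))`, checked on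
the monomial basis: a product of `x_i` with a monomial of positive degree is zero or a multiple of a
basis element of degree at least two. Writing `T h = Σ λ(h₁) h₂`, the skew-primitivity of `x_i` and
this identity give `T(x_i h) = α_i (T h - g T(g h)) + x_i g T(g h)`, so the partial action identity
at `h` and at `g h` implies it at `x_i h`. As `g` is a grouplike involution, the set of `h` at which
the identity holds together with `g h` is a subspace containing `1` and stable under left
multiplication by `g` and by the `x_i`, hence all of `H`.
-/

section PartialAction

variable {k H : Type*} [CommRing k] [Ring H] [Bialgebra k H] (lam : H →ₗ[k] k)

def partialActionLocus : Submodule k H where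
  carrier := {h | ∀ y, lam h * lam y = lam (lCont k H lam h * y)}
  zero_mem' y := by simp
  add_mem' {a b} ha hb y := by simp only [map_add, add_mul, ha y, hb y]
  smul_mem' c a ha y := by simp only [map_smul, smul_mul_assoc, smul_eq_mul, mul_assoc, ha y]

variable {lam}

lemma one_mem_partialActionLocus (h1 : lam 1 = 1) : (1 : H) ∈ partialActionLocus lam := by
  intro y
  simp [lCont, Algebra.TensorProduct.one_def, h1]

lemma mem_partialActionLocus_of_comul_eq {g : H} (hg : Coalgebra.comul (R := k) g = g ⊗ₜ g)
    (hlg : lam g = 0) : g ∈ partialActionLocus lam := by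
  intro y
  simp [lCont, hg, hlg]

lemma lCont_sub (lam' : H →ₗ[k] k) (h : H) :
    lCont k H (lam - lam') h = lCont k H lam h - lCont k H lam' h := by
  simp only [lCont, LinearMap.comp_apply, LinearEquiv.coe_coe]
  induction Coalgebra.comul (R := k) h using TensorProduct.induction_on with
  | zero => simp
  | tmul a b => simp [sub_smul]
  | add z w hz hw => simp only [map_add, hz, hw]; abel

lemma lCont_smul (c : k) (h : H) : lCont k H (c • lam) h = c • lCont k H lam h := by
  simp [lCont, TensorProduct.map_smul_left]

variable (lam) in
lemma lid_map_tmul_mul (a b : H) (z : H ⊗[k] H) :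
    TensorProduct.lid k H (TensorProduct.map lam LinearMap.id ((a ⊗ₜ b) * z)) =
      b * TensorProduct.lid k H
        (TensorProduct.map (lam ∘ₗ LinearMap.mulLeft k a) LinearMap.id z) := by
  induction z using TensorProduct.induction_on with
  | zero => simp
  | tmul c d => simp
  | add z w hz hw => simp only [mul_add, map_add, hz, hw]

lemma lCont_mul_of_comul_eq {g : H} (hg : Coalgebra.comul (R := k) g = g ⊗ₜ g) (h : H) :
    lCont k H lam (g * h) = g * lCont k H (lam ∘ₗ LinearMap.mulLeft k g) h := by
  simp only [lCont, LinearMap.comp_apply, Bialgebra.comul_mul, hg, LinearEquiv.coe_coe,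
    lid_map_tmul_mul]

lemma lCont_mul_of_comul_eq_add {g x : H}
    (hx : Coalgebra.comul (R := k) x = x ⊗ₜ 1 + g ⊗ₜ x) (h : H) :
    lCont k H lam (x * h) =
      lCont k H (lam ∘ₗ LinearMap.mulLeft k x) h +
        x * lCont k H (lam ∘ₗ LinearMap.mulLeft k g) h := by
  simp only [lCont, LinearMap.comp_apply, Bialgebra.comul_mul, hx, add_mul, map_add,
    LinearEquiv.coe_coe, lid_map_tmul_mul, one_mul]

lemma skewPrimitive_mul_mem_partialActionLocus {g x : H} {a : k}
    (hg : Coalgebra.comul (R := k) g = g ⊗ₜ g) (hgg : g * g = 1)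
    (hx : Coalgebra.comul (R := k) x = x ⊗ₜ 1 + g ⊗ₜ x)
    (hlx : lam ∘ₗ LinearMap.mulLeft k x = a • (lam - lam ∘ₗ LinearMap.mulLeft k g))
    {h : H} (hh : h ∈ partialActionLocus lam) (hgh : g * h ∈ partialActionLocus lam) :
    x * h ∈ partialActionLocus lam := by
  have hlx' (z : H) : lam (x * z) = a * (lam z - lam (g * z)) := by
    simpa using LinearMap.congr_fun hlx z
  have hlg : lCont k H (lam ∘ₗ LinearMap.mulLeft k g) h = g * lCont k H lam (g * h) := by
    rw [lCont_mul_of_comul_eq hg, ← mul_assoc, hgg, one_mul]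
  set T := lCont k H lam h
  set T' := lCont k H lam (g * h)
  have hT : lCont k H lam (x * h) = a • (T - g * T') + x * (g * T') := by
    rw [lCont_mul_of_comul_eq_add hx, hlx, lCont_smul, lCont_sub, hlg]
  intro y
  have hxy := hlx' (g * T' * y)
  rw [← mul_assoc g, ← mul_assoc g, hgg, one_mul] at hxy
  simp only [hT, add_mul, sub_mul, smul_mul_assoc, map_add, map_sub, map_smul, smul_eq_mul,
    mul_assoc] at hxy ⊢
  linear_combination a * hh y - a * hgh y + hlx' h * lam y - hxy

lemma skewPrimitive_mul_mem_partialActionLocus_inf_comap {g x : H} {a : k}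
    (hg : Coalgebra.comul (R := k) g = g ⊗ₜ g) (hgg : g * g = 1)
    (hx : Coalgebra.comul (R := k) x = x ⊗ₜ 1 + g ⊗ₜ x) (hxg : x * g = -(g * x))
    (hlx : lam ∘ₗ LinearMap.mulLeft k x = a • (lam - lam ∘ₗ LinearMap.mulLeft k g)) {h : H}
    (hh : h ∈ partialActionLocus lam ⊓ (partialActionLocus lam).comap (LinearMap.mulLeft k g)) :
    x * h ∈ partialActionLocus lam ⊓ (partialActionLocus lam).comap (LinearMap.mulLeft k g) := by
  obtain ⟨hh, hgh : g * h ∈ partialActionLocus lam⟩ := Submodule.mem_inf.mp hh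
  have hggh : g * (g * h) ∈ partialActionLocus lam := by rwa [← mul_assoc, hgg, one_mul]
  refine Submodule.mem_inf.mpr ⟨skewPrimitive_mul_mem_partialActionLocus hg hgg hx hlx hh hgh, ?_⟩
  have hgxh : g * (x * h) = -(x * (g * h)) := by
    rw [← mul_assoc x, hxg, neg_mul, neg_neg, mul_assoc]
  rw [Submodule.mem_comap, LinearMap.mulLeft_apply, hgxh]
  exact neg_mem (skewPrimitive_mul_mem_partialActionLocus hg hgg hx hlx hgh hggh)

end PartialAction

section Anticommuting

variable {A ι : Type*} [Ring A] [DecidableEq ι] {x : ι → A}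

lemma mul_pow_fin_two_of_anticomm {a b : A} (hab : a * b = -(b * a)) (e : Fin 2) :
    a * b ^ (e : ℕ) = (-1 : ℤ) ^ (e : ℕ) • (b ^ (e : ℕ) * a) := by
  fin_cases e <;> simp [hab]

lemma mul_prod_map_pow_eq_zero (hx : ∀ i j, x i * x j = -(x j * x i)) (hsq : ∀ i, x i ^ 2 = 0)
    {r : ι → Fin 2} {j : ι} (hj : r j = 1) {L : List ι} (hL : j ∈ L) :
    x j * (L.map fun i => x i ^ (r i : ℕ)).prod = 0 := by
  induction L with
  | nil => simp at hL
  | cons a L ih =>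
    rw [List.map_cons, List.prod_cons, ← mul_assoc]
    by_cases haj : a = j
    · subst haj
      simp [hj, ← pow_two, hsq]
    · rw [mul_pow_fin_two_of_anticomm (hx j a), smul_mul_assoc, mul_assoc,
        ih (List.mem_of_ne_of_mem (Ne.symm haj) hL), mul_zero, smul_zero]

lemma mul_prod_map_pow_eq_update (hx : ∀ i j, x i * x j = -(x j * x i))
    {r : ι → Fin 2} {j : ι} (hj : r j = 0) {L : List ι} (hL : j ∈ L) (hnd : L.Nodup) :
    ∃ m : ℕ, x j * (L.map fun i => x i ^ (r i : ℕ)).prod =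
      (-1 : ℤ) ^ m • (L.map fun i => x i ^ (Function.update r j 1 i : ℕ)).prod := by
  induction L with
  | nil => simp at hL
  | cons a L ih =>
    obtain ⟨haL, hnd⟩ := List.nodup_cons.mp hnd
    simp only [List.map_cons, List.prod_cons]
    by_cases haj : a = j
    · subst haj
      refine ⟨0, ?_⟩
      have hL' : (L.map fun i => x i ^ (Function.update r a 1 i : ℕ)) =
          L.map fun i => x i ^ (r i : ℕ) :=
        List.map_congr_left fun i hi => by rw [Function.update_of_ne (ne_of_mem_of_not_mem hi haL)]
      simp [hj, hL']
    · obtain ⟨m, hm⟩ := ih (List.mem_of_ne_of_mem (Ne.symm haj) hL) hnd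
      refine ⟨(r a : ℕ) + m, ?_⟩
      rw [← mul_assoc, mul_pow_fin_two_of_anticomm (hx j a), smul_mul_assoc, mul_assoc, hm,
        Function.update_of_ne haj, mul_smul_comm, smul_smul, pow_add]

end Anticommuting

section FinTwoVectors

variable {ι : Type*} [Fintype ι] {r : ι → Fin 2}

lemma sum_val_eq_zero_iff : ∑ i, (r i : ℕ) = 0 ↔ r = 0 := by
  simp only [Finset.sum_eq_zero_iff, Finset.mem_univ, true_implies, funext_iff, Pi.zero_apply,
    Fin.val_eq_zero_iff]

lemma sum_val_update_one [DecidableEq ι] {j : ι} (hj : r j = 0) :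
    ∑ i, (Function.update r j 1 i : ℕ) = ∑ i, (r i : ℕ) + 1 := by
  have herase : ∑ i ∈ Finset.univ.erase j, (Function.update r j 1 i : ℕ) =
      ∑ i ∈ Finset.univ.erase j, (r i : ℕ) :=
    Finset.sum_congr rfl fun i hi => by rw [Function.update_of_ne (Finset.ne_of_mem_erase hi)]
  rw [← Finset.add_sum_erase _ _ (Finset.mem_univ j),
    ← Finset.add_sum_erase _ _ (Finset.mem_univ j), herase, Function.update_self, hj, Fin.val_zero, Fin.val_one]
  omega

end FinTwoVectors

namespace NicholsData

variable {k H : Type*} [Field k] [Ring H] [HopfAlgebra k H] {n : ℕ} (N : NicholsData k n H)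

def mono (r : Fin (n - 1) → Fin 2) : H :=
  ((List.finRange (n - 1)).map fun i => N.x i ^ (r i : ℕ)).prod

lemma basis_zero_fst (r : Fin (n - 1) → Fin 2) : N.basis (0, r) = N.mono r := by
  simpa [mono] using N.basis_eq (0, r)

lemma basis_one_fst (r : Fin (n - 1) → Fin 2) : N.basis (1, r) = N.g * N.mono r := by
  simpa [mono] using N.basis_eq (1, r)

lemma mono_zero : N.mono 0 = 1 := by
  simp [mono]

lemma g_mul_g : N.g * N.g = 1 := by
  rw [← pow_two, N.g_sq]

lemma x_mul_g_mul (i : Fin (n - 1)) (z : H) : N.x i * (N.g * z) = -(N.g * (N.x i * z)) := by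
  rw [← mul_assoc, N.x_mul_g, neg_mul, mul_assoc]

lemma x_mul_mono_of_eq_one {r : Fin (n - 1) → Fin 2} {j : Fin (n - 1)} (hj : r j = 1) :
    N.x j * N.mono r = 0 :=
  mul_prod_map_pow_eq_zero N.x_mul_x N.x_sq hj (List.mem_finRange j)

lemma x_mul_mono_of_eq_zero {r : Fin (n - 1) → Fin 2} {j : Fin (n - 1)} (hj : r j = 0) :
    ∃ m : ℕ, N.x j * N.mono r = (-1 : ℤ) ^ m • N.mono (Function.update r j 1) :=
  mul_prod_map_pow_eq_update N.x_mul_x hj (List.mem_finRange j) (List.nodup_finRange _)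

lemma eq_top_of_one_mem_of_mul_mem (S : Submodule k H) (h1 : 1 ∈ S)
    (hg : ∀ z ∈ S, N.g * z ∈ S) (hx : ∀ i, ∀ z ∈ S, N.x i * z ∈ S) : S = ⊤ := by
  have hmono (r : Fin (n - 1) → Fin 2) : N.mono r ∈ S := by
    unfold mono
    induction List.finRange (n - 1) with
    | nil => simpa using h1
    | cons a L ih =>
      rw [List.map_cons, List.prod_cons]
      obtain h | h : r a = 0 ∨ r a = 1 := by omega
      · simpa [h] using ih
      · simpa [h] using hx a _ ih
  rw [eq_top_iff, ← N.basis.span_eq, Submodule.span_le]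
  rintro _ ⟨⟨l, r⟩, rfl⟩
  fin_cases l
  · simpa [basis_zero_fst] using hmono r
  · simpa [basis_one_fst] using hg _ (hmono r)

section Functional

variable {N} {α : Fin (n - 1) → k} {lam : H →ₗ[k] k}

lemma lam_mono_eq_zero
    (hlam0 : ∀ p : Fin 2 × (Fin (n - 1) → Fin 2), 2 ≤ ∑ i, ((p.2 i : ℕ)) → lam (N.basis p) = 0)
    {r : Fin (n - 1) → Fin 2} (hr : 2 ≤ ∑ i, (r i : ℕ)) :
    lam (N.mono r) = 0 ∧ lam (N.g * N.mono r) = 0 := by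
  rw [← basis_one_fst, ← basis_zero_fst]
  exact ⟨hlam0 (0, r) hr, hlam0 (1, r) hr⟩

lemma lam_x_mul_mono_eq_zero
    (hlam0 : ∀ p : Fin 2 × (Fin (n - 1) → Fin 2), 2 ≤ ∑ i, ((p.2 i : ℕ)) → lam (N.basis p) = 0)
    {r : Fin (n - 1) → Fin 2} (hr : r ≠ 0) (j : Fin (n - 1)) :
    lam (N.x j * N.mono r) = 0 ∧ lam (N.g * (N.x j * N.mono r)) = 0 := by
  obtain hj | hj : r j = 1 ∨ r j = 0 := by omega
  · simp [N.x_mul_mono_of_eq_one hj]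
  · obtain ⟨m, hm⟩ := N.x_mul_mono_of_eq_zero hj
    have hpos : ∑ i, (r i : ℕ) ≠ 0 := sum_val_eq_zero_iff.not.mpr hr
    obtain ⟨h0, h1⟩ := lam_mono_eq_zero hlam0 (r := Function.update r j 1)
      (by rw [sum_val_update_one hj]; omega)
    rw [hm, mul_smul_comm, map_zsmul, map_zsmul, h0, h1, smul_zero, and_self]

lemma lam_g_mul_mono (hlamx : ∀ i, lam (N.x i) = α i) (hlamgx : ∀ i, lam (N.g * N.x i) = α i)
    (hlam0 : ∀ p : Fin 2 × (Fin (n - 1) → Fin 2), 2 ≤ ∑ i, ((p.2 i : ℕ)) → lam (N.basis p) = 0)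
    {r : Fin (n - 1) → Fin 2} (hr : r ≠ 0) : lam (N.g * N.mono r) = lam (N.mono r) := by
  obtain hr2 | hr1 := le_or_gt 2 (∑ i, (r i : ℕ))
  · obtain ⟨h0, h1⟩ := lam_mono_eq_zero hlam0 hr2
    rw [h0, h1]
  obtain ⟨j, hj⟩ := Function.ne_iff.mp hr
  replace hj : r j = 1 := by rw [Pi.zero_apply] at hj; omega
  have hupd : Function.update r j 1 = r := Function.update_eq_self_iff.mpr hj.symm
  have hr' : Function.update r j 0 = 0 := by
    rw [← sum_val_eq_zero_iff]
    have := sum_val_update_one (r := Function.update r j 0) (j := j) (by simp)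
    rw [Function.update_idem, hupd] at this
    omega
  obtain ⟨m, hm⟩ := N.x_mul_mono_of_eq_zero (r := 0) (j := j) rfl
  rw [mono_zero, mul_one, ← hr', Function.update_idem, hupd] at hm
  have hsign : ((-1 : ℤ) ^ m) * (-1) ^ m = 1 := by rw [← mul_pow]; simp
  have hmono : N.mono r = (-1 : ℤ) ^ m • N.x j := by rw [hm, smul_smul, hsign, one_smul]
  rw [hmono, mul_smul_comm, map_zsmul, map_zsmul, hlamx, hlamgx]

lemma lam_comp_mulLeft_x (hlam1 : lam 1 = 1) (hlamg : lam N.g = 0)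
    (hlamx : ∀ i, lam (N.x i) = α i) (hlamgx : ∀ i, lam (N.g * N.x i) = α i)
    (hlam0 : ∀ p : Fin 2 × (Fin (n - 1) → Fin 2), 2 ≤ ∑ i, ((p.2 i : ℕ)) → lam (N.basis p) = 0)
    (j : Fin (n - 1)) :
    lam ∘ₗ LinearMap.mulLeft k (N.x j) = α j • (lam - lam ∘ₗ LinearMap.mulLeft k N.g) := by
  refine N.basis.ext fun ⟨l, r⟩ => ?_
  have key : lam (N.x j * N.mono r) = α j * (lam (N.mono r) - lam (N.g * N.mono r)) ∧
      lam (N.g * (N.x j * N.mono r)) = α j * (lam (N.mono r) - lam (N.g * N.mono r)) := by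
    rcases eq_or_ne r 0 with rfl | hr
    · simp [mono_zero, hlam1, hlamg, hlamx, hlamgx]
    · rw [lam_g_mul_mono hlamx hlamgx hlam0 hr, sub_self, mul_zero]
      exact lam_x_mul_mono_eq_zero hlam0 hr j
  fin_cases l
  · simp [basis_zero_fst, key.1]
  · simp [basis_one_fst, x_mul_g_mul, ← mul_assoc N.g N.g, g_mul_g, key.2]
    ring

end Functional

end NicholsData

theorem prop_4_1_1_general {k H : Type*} [Field k] [Ring H] [HopfAlgebra k H]
    {n : ℕ}
    (N : NicholsData k n H) (α : Fin (n - 1) → k) (lam : H →ₗ[k] k)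
    (hlam1 : lam 1 = 1)
    (hlamg : lam N.g = 0)
    (hlamx : ∀ i, lam (N.x i) = α i)
    (hlamgx : ∀ i, lam (N.g * N.x i) = α i)
    (hlam0 : ∀ p : Fin 2 × (Fin (n - 1) → Fin 2),
      2 ≤ ∑ i, ((p.2 i : ℕ)) → lam (N.basis p) = 0) :
    IsPartialAction k H lam := by
  set L := partialActionLocus lam
  have htop : L ⊓ L.comap (LinearMap.mulLeft k N.g) = ⊤ := by
    refine N.eq_top_of_one_mem_of_mul_mem _ ?_ (fun z hz => ?_) (fun i z hz => ?_)
    · simpa using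
        ⟨one_mem_partialActionLocus hlam1, mem_partialActionLocus_of_comul_eq N.comul_g hlamg⟩
    · simpa [← mul_assoc, N.g_mul_g, and_comm] using hz
    · exact skewPrimitive_mul_mem_partialActionLocus_inf_comap N.comul_g N.g_mul_g (N.comul_x i)
        (N.x_mul_g i) (N.lam_comp_mulLeft_x hlam1 hlamg hlamx hlamgx hlam0 i) hz
  exact ⟨hlam1, fun h => (inf_le_left : _ ≤ L) (htop ▸ Submodule.mem_top : h ∈ _)⟩

/-- Proposition 4.1.1: for every `α = (α_1, …, α_{n−1}) ∈ k^{n−1}`, the linear map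
`λ_α : H_{2^n} → k` determined on the canonical basis `B` by `λ_α(1) = 1`,
`λ_α(x_i) = λ_α(g x_i) = α_i` for all `i`, and `λ_α = 0` on all other elements of `B`
(in particular `λ_α(g) = 0` and `λ_α` vanishes on every basis element involving at least two
of the `x_i`), is a partial action of the Nichols Hopf algebra `H_{2^n}` on `k`. -/
theorem prop_4_1_1 {k H : Type*} [Field k] [Ring H] [HopfAlgebra k H]
    {n : ℕ} (hn : 2 ≤ n) (hchar : ringChar k ≠ 2)
    (N : NicholsData k n H) (α : Fin (n - 1) → k) (lam : H →ₗ[k] k)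
    (hlam1 : lam 1 = 1)
    (hlamg : lam N.g = 0)
    (hlamx : ∀ i, lam (N.x i) = α i)
    (hlamgx : ∀ i, lam (N.g * N.x i) = α i)
    (hlam0 : ∀ p : Fin 2 × (Fin (n - 1) → Fin 2),
      2 ≤ ∑ i, ((p.2 i : ℕ)) → lam (N.basis p) = 0) :
    IsPartialAction k H lam :=
  prop_4_1_1_general N α lam hlam1 hlamg hlamx hlamgx hlam0
end

section
/- Every partial action of the Nichols Hopf algebra H_{2^n} on its base field k is symmetric; that is, every linear map λ : H_{2^n} → k satisfying λ(1) = 1 and λ(h)λ(y) = Σ λ(h₁)λ(h₂y) for all h, y ∈ H_{2^n} also satisfies λ(h)λ(y) = Σ λ(h₁y)λ(h₂) for all h, y ∈ H_{2^n}. (Theorem 4.1.3) -/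
/-!
The elements `z` with `λ(z)λ(y) = Σ λ(z₁y)λ(z₂)` for all `y` form a subspace `M`. Applying the
partial-action identity to the group-like `g` and to `g xᵢ`, whose coproduct is
`g xᵢ ⊗ g + 1 ⊗ g xᵢ`, gives `λ(g)λ(gy) = λ(g)λ(y)` and `λ(xᵢ y) = λ(g xᵢ)(λ(y) - λ(gy))`.
With these, `z, gz ∈ M` implies `xᵢ z ∈ M`; hence `{z | z ∈ M ∧ gz ∈ M}` contains `1` and is
stable under left multiplication by the generators, so it is all of `H`.
-/

open scoped TensorProduct

namespace Submodule

variable {R A : Type*} [CommSemiring R] [Semiring A] [Algebra R A]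

theorem eq_top_of_one_mem_of_mul_mem {s : Set A} (hs : Algebra.adjoin R s = ⊤)
    (S : Submodule R A) (h1 : 1 ∈ S) (hmul : ∀ a ∈ s, ∀ z ∈ S, a * z ∈ S) : S = ⊤ := by
  have hstab : ∀ a ∈ Algebra.adjoin R s, ∀ z ∈ S, a * z ∈ S := by
    intro a ha
    induction ha using Algebra.adjoin_induction with
    | mem a ha => exact hmul a ha
    | algebraMap r =>
      intro z hz
      simpa [Algebra.algebraMap_eq_smul_one] using S.smul_mem r hz
    | add a b _ _ ha hb =>
      intro z hz
      simpa [add_mul] using S.add_mem (ha z hz) (hb z hz)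
    | mul a b _ _ ha hb =>
      intro z hz
      simpa [mul_assoc] using ha _ (hb z hz)
  refine eq_top_iff'.2 fun a => ?_
  simpa using hstab a (hs ▸ Algebra.mem_top) 1 h1

end Submodule

namespace NicholsData

variable {k : Type*} [Field k] {n : ℕ} {H : Type*} [Ring H] [HopfAlgebra k H]

theorem adjoin_eq_top (N : NicholsData k n H) :
    Algebra.adjoin k (insert N.g (Set.range N.x)) = ⊤ := by
  refine eq_top_iff.2 fun h _ => ?_
  have hspan : h ∈ Submodule.span k (Set.range N.basis) := N.basis.span_eq ▸ Submodule.mem_top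
  refine (Submodule.span_le (p := Subalgebra.toSubmodule (Algebra.adjoin k _))).2 ?_ hspan
  rintro _ ⟨p, rfl⟩
  rw [N.basis_eq]
  refine Subalgebra.mul_mem _ (Subalgebra.pow_mem _ (Algebra.subset_adjoin (Set.mem_insert _ _)) _)
    (Subalgebra.list_prod_mem _ ?_)
  simp only [List.mem_map]
  rintro _ ⟨i, -, rfl⟩
  exact Subalgebra.pow_mem _
    (Algebra.subset_adjoin (Set.mem_insert_of_mem _ (Set.mem_range_self i))) _

theorem g_mul_g_s15 (N : NicholsData k n H) : N.g * N.g = 1 := by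
  rw [← pow_two, N.g_sq]

end NicholsData

section

variable {k H : Type*} [CommRing k] [Ring H] [Bialgebra k H] (μ : H →ₗ[k] k) {g x : H}

theorem rCont_smul (c : k) : rCont k H (c • μ) = c • rCont k H μ := by
  simp [rCont, TensorProduct.map_smul_right, LinearMap.comp_smul, LinearMap.smul_comp]

theorem rCont_add (ν : H →ₗ[k] k) : rCont k H (μ + ν) = rCont k H μ + rCont k H ν := by
  simp [rCont, TensorProduct.map_add_right, LinearMap.comp_add, LinearMap.add_comp]

theorem rCont_sub (ν : H →ₗ[k] k) : rCont k H (μ - ν) = rCont k H μ - rCont k H ν :=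
  eq_sub_of_add_eq (by rw [← rCont_add, sub_add_cancel])

theorem rCont_one : rCont k H μ 1 = μ 1 • 1 := by
  simp [rCont, Bialgebra.comul_one, Algebra.TensorProduct.one_def]

theorem lCont_grouplike (hg : Coalgebra.comul (R := k) g = g ⊗ₜ[k] g) :
    lCont k H μ g = μ g • g := by
  simp [lCont, hg]

theorem rCont_grouplike (hg : Coalgebra.comul (R := k) g = g ⊗ₜ[k] g) :
    rCont k H μ g = μ g • g := by
  simp [rCont, hg]

theorem rid_map_id_tmul_mul (a b : H) (t : H ⊗[k] H) :
    TensorProduct.rid k H (TensorProduct.map LinearMap.id μ ((a ⊗ₜ[k] b) * t)) =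
      a * TensorProduct.rid k H
        (TensorProduct.map LinearMap.id (μ ∘ₗ LinearMap.mulLeft k b) t) := by
  induction t using TensorProduct.induction_on with
  | zero => simp
  | tmul c d => simp
  | add u v hu hv => simp [mul_add, hu, hv]

theorem rCont_grouplike_mul (hg : Coalgebra.comul (R := k) g = g ⊗ₜ[k] g) (z : H) :
    rCont k H μ (g * z) = g * rCont k H (μ ∘ₗ LinearMap.mulLeft k g) z := by
  simp only [rCont, LinearMap.comp_apply, Bialgebra.comul_mul, hg, LinearEquiv.coe_coe,
    rid_map_id_tmul_mul]

theorem rCont_skewPrimitive_mul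
    (hx : Coalgebra.comul (R := k) x = x ⊗ₜ[k] (1 : H) + g ⊗ₜ[k] x) (z : H) :
    rCont k H μ (x * z) = x * rCont k H μ z + g * rCont k H (μ ∘ₗ LinearMap.mulLeft k x) z := by
  simp only [rCont, LinearMap.comp_apply, Bialgebra.comul_mul, hx, add_mul, map_add,
    LinearEquiv.coe_coe, rid_map_id_tmul_mul, LinearMap.mulLeft_one, LinearMap.comp_id]

theorem comul_grouplike_mul_skewPrimitive (hgg : g * g = 1)
    (hg : Coalgebra.comul (R := k) g = g ⊗ₜ[k] g)
    (hx : Coalgebra.comul (R := k) x = x ⊗ₜ[k] (1 : H) + g ⊗ₜ[k] x) :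
    Coalgebra.comul (R := k) (g * x) = (g * x) ⊗ₜ[k] g + (1 : H) ⊗ₜ[k] (g * x) := by
  simp [Bialgebra.comul_mul, hg, hx, mul_add, hgg]

end

def symmLocus (k H : Type*) [CommRing k] [Ring H] [Bialgebra k H] (lam : H →ₗ[k] k) :
    Submodule k H where
  carrier := {z | ∀ y, lam z * lam y = lam (rCont k H lam z * y)}
  add_mem' {u v} hu hv y := by simp [add_mul, hu y, hv y]
  zero_mem' y := by simp
  smul_mem' c u hu y := by simp [mul_assoc, hu y]

section

variable {k H : Type*} [CommRing k] [Ring H] [Bialgebra k H] {lam : H →ₗ[k] k} {g x : H}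

theorem IsPartialAction.lam_mul_grouplike_mul (hlam : IsPartialAction k H lam)
    (hg : Coalgebra.comul (R := k) g = g ⊗ₜ[k] g) (y : H) :
    lam g * lam (g * y) = lam g * lam y := by
  simpa [lCont_grouplike lam hg] using (hlam.2 g y).symm

theorem IsPartialAction.lam_comp_mulLeft_grouplike_mul (hlam : IsPartialAction k H lam)
    (hgg : g * g = 1) (hg : Coalgebra.comul (R := k) g = g ⊗ₜ[k] g)
    (hx : Coalgebra.comul (R := k) x = x ⊗ₜ[k] (1 : H) + g ⊗ₜ[k] x) :
    lam ∘ₗ LinearMap.mulLeft k (g * x) = lam (g * x) • (lam - lam ∘ₗ LinearMap.mulLeft k g) := by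
  ext y
  have h := hlam.2 (g * x) y
  simp only [lCont, LinearMap.comp_apply, comul_grouplike_mul_skewPrimitive hgg hg hx,
    map_add, TensorProduct.map_tmul, LinearEquiv.coe_coe, TensorProduct.lid_tmul, hlam.1] at h
  simp only [LinearMap.comp_apply, LinearMap.mulLeft_apply, LinearMap.smul_apply,
    LinearMap.sub_apply, smul_eq_mul]
  rw [add_mul, map_add, smul_mul_assoc, map_smul, smul_eq_mul, one_smul] at h
  linear_combination -h

theorem IsPartialAction.lam_comp_mulLeft_skewPrimitive (hlam : IsPartialAction k H lam)
    (hgg : g * g = 1) (hg : Coalgebra.comul (R := k) g = g ⊗ₜ[k] g)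
    (hx : Coalgebra.comul (R := k) x = x ⊗ₜ[k] (1 : H) + g ⊗ₜ[k] x) (hxg : x * g = -(g * x)) :
    lam ∘ₗ LinearMap.mulLeft k x = lam (g * x) • (lam - lam ∘ₗ LinearMap.mulLeft k g) := by
  have hgx := hlam.lam_comp_mulLeft_grouplike_mul hgg hg hx
  ext y
  have hxy : x * y = -((g * x) * (g * y)) := by
    rw [← mul_assoc, mul_assoc g x g, hxg, mul_neg, ← mul_assoc, hgg, one_mul, neg_mul, neg_neg]
  have h := LinearMap.congr_fun hgx (g * y)
  simp only [LinearMap.comp_apply, LinearMap.mulLeft_apply, LinearMap.smul_apply,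
    LinearMap.sub_apply, smul_eq_mul, ← mul_assoc g g, hgg, one_mul] at h ⊢
  rw [hxy, map_neg, h]
  ring

theorem one_mem_symmLocus (h1 : lam 1 = 1) : (1 : H) ∈ symmLocus k H lam := fun y => by
  simp [rCont_one, h1]

theorem IsPartialAction.grouplike_mem_symmLocus (hlam : IsPartialAction k H lam)
    (hg : Coalgebra.comul (R := k) g = g ⊗ₜ[k] g) : g ∈ symmLocus k H lam := fun y => by
  simp [rCont_grouplike lam hg, hlam.lam_mul_grouplike_mul hg]

theorem IsPartialAction.skewPrimitive_mul_mem_symmLocus (hlam : IsPartialAction k H lam)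
    (hgg : g * g = 1) (hg : Coalgebra.comul (R := k) g = g ⊗ₜ[k] g)
    (hx : Coalgebra.comul (R := k) x = x ⊗ₜ[k] (1 : H) + g ⊗ₜ[k] x) (hxg : x * g = -(g * x))
    {z : H} (hz : z ∈ symmLocus k H lam) (hgz : g * z ∈ symmLocus k H lam) :
    x * z ∈ symmLocus k H lam := by
  have hlx := hlam.lam_comp_mulLeft_skewPrimitive hgg hg hx hxg
  have hlam_x_mul (w : H) : lam (x * w) = lam (g * x) * (lam w - lam (g * w)) := by
    simpa using LinearMap.congr_fun hlx w
  have hR : rCont k H lam (x * z) = x * rCont k H lam z +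
      lam (g * x) • (g * rCont k H lam z - rCont k H lam (g * z)) := by
    rw [rCont_skewPrimitive_mul lam hx, hlx, rCont_smul, rCont_sub, rCont_grouplike_mul lam hg]
    simp [mul_sub]
  intro y
  calc lam (x * z) * lam y = lam (g * x) * (lam z * lam y - lam (g * z) * lam y) := by
        rw [hlam_x_mul]; ring
    _ = lam (g * x) * (lam (rCont k H lam z * y) - lam (rCont k H lam (g * z) * y)) := by
        rw [hz y, hgz y]
    _ = lam (rCont k H lam (x * z) * y) := by
        rw [hR, add_mul, map_add, mul_assoc, hlam_x_mul, smul_mul_assoc, map_smul, sub_mul,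
          map_sub, mul_assoc g, smul_eq_mul]
        ring

end

theorem thm_4_1_3_general {k H : Type*} [Field k] [Ring H] [HopfAlgebra k H]
    {n : ℕ}
    (N : NicholsData k n H) (lam : H →ₗ[k] k)
    (hlam : IsPartialAction k H lam) :
    IsSymmPartialAction k H lam := by
  set M := symmLocus k H lam
  have hg_mul_mem {z : H} (hz : z ∈ M) : N.g * (N.g * z) ∈ M := by
    rwa [← mul_assoc, N.g_mul_g_s15, one_mul]
  have hx_mul_mem (i) {z : H} (hz : z ∈ M) (hgz : N.g * z ∈ M) : N.x i * z ∈ M :=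
    hlam.skewPrimitive_mul_mem_symmLocus N.g_mul_g_s15 N.comul_g (N.comul_x i) (N.x_mul_g i) hz hgz
  -- `x i * z ∈ M` needs `g * z ∈ M` too, so `M` is tracked together with its `g`-translate.
  let S := M ⊓ M.comap (LinearMap.mulLeft k N.g)
  have hS : S = ⊤ := by
    refine Submodule.eq_top_of_one_mem_of_mul_mem N.adjoin_eq_top S
      ⟨one_mem_symmLocus hlam.1, by simpa using hlam.grouplike_mem_symmLocus N.comul_g⟩ ?_
    rintro a (rfl | ⟨i, rfl⟩) z ⟨hz, hgz⟩
    · exact ⟨hgz, hg_mul_mem hz⟩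
    · have hgxz : N.g * (N.x i * z) = -(N.x i * (N.g * z)) := by
        rw [← mul_assoc, ← mul_assoc, N.x_mul_g i, neg_mul, neg_neg]
      refine ⟨hx_mul_mem i hz hgz, ?_⟩
      show N.g * (N.x i * z) ∈ M
      rw [hgxz]
      exact neg_mem (hx_mul_mem i hgz (hg_mul_mem hz))
  exact ⟨hlam, fun h => (hS ▸ Submodule.mem_top : h ∈ S).1⟩

/-- Theorem 4.1.3: every partial action of the Nichols Hopf algebra `H_{2^n}` on its base
field `k` is symmetric: every linear map `λ : H_{2^n} → k` with `λ(1) = 1` and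
`λ(h)λ(y) = Σ λ(h₁)λ(h₂y)` for all `h, y` also satisfies `λ(h)λ(y) = Σ λ(h₁y)λ(h₂)`
for all `h, y`. -/
theorem thm_4_1_3 {k H : Type*} [Field k] [Ring H] [HopfAlgebra k H]
    {n : ℕ} (hn : 2 ≤ n) (hchar : ringChar k ≠ 2)
    (N : NicholsData k n H) (lam : H →ₗ[k] k)
    (hlam : IsPartialAction k H lam) :
    IsSymmPartialAction k H lam :=
  thm_4_1_3_general N lam hlam
end
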